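/- arXiv:2206.12210 — 3 statements merged into one kernel-verified Lean document; each statement's English description precedes it below -/
import Mathlib

section
/- Let V = I ∪ A ∪ B be a partition of an n-vertex set with |I| = k − 1 and |A| = ⌈k/2⌉, and let H be the graph with edge set consisting of all pairs {x,y} with x ∈ I, y ∈ A, together with all pairs within A ∪ B. Then α(H) = k, δ(H) ≥ k/2, and deleting A from H leaves a graph with exactly k connected components (the k−1 isolated vertices of I plus the clique on B); in particular H is not 1-tough when k > ⌈k/2⌉, hence H is not Hamiltonian. -/
/-- The independence number of a graph: the largest size of a set of pairwise
non-adjacent vertices. -/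
noncomputable def indepNum {V : Type*} [Fintype V] (G : SimpleGraph V) : ℕ :=
  sSup {k | ∃ s : Finset V, (∀ u ∈ s, ∀ v ∈ s, u ≠ v → ¬ G.Adj u v) ∧ s.card = k}

/-!
The graph `H - A` consists of the `k - 1` isolated vertices of `I` together with the clique
on `B`, so it has `k` components. A Hamiltonian graph is 1-tough: walking along a Hamiltonian
cycle, every component of `G - S` is left through a dart ending in `S`, and distinct components
give distinct ends, so `G - S` has at most `|S|` components. As `|A| = ⌈k/2⌉ < k`, `H` is not
Hamiltonian. The independence number is `k` since an independent set meets the clique `A ∪ B`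
at most once, while `I ∪ {b}` is independent for every `b ∈ B`.
-/

open Finset

theorem indepNum_eq_simpleGraph_indepNum {V : Type*} [Fintype V] (G : SimpleGraph V) :
    indepNum G = G.indepNum := by
  simp only [indepNum, SimpleGraph.indepNum, SimpleGraph.isNIndepSet_iff,
    SimpleGraph.isIndepSet_iff, Set.Pairwise, mem_coe]

namespace SimpleGraph

variable {V : Type*} {G : SimpleGraph V}

theorem IsIndepSet.card_le_card_add_one [DecidableEq V] {s I K : Finset V}
    (hs : G.IsIndepSet s) (hK : G.IsClique (K : Set V)) (hsub : s ⊆ I ∪ K) :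
    #s ≤ #I + 1 := by
  have hsK : #(s ∩ K) ≤ 1 := card_le_one.mpr fun u hu v hv => by
    rw [mem_inter] at hu hv
    by_contra huv
    exact hs hu.1 hv.1 huv (hK hu.2 hv.2 huv)
  calc #s ≤ #(s ∩ I ∪ s ∩ K) :=
        card_le_card (by rw [← inter_union_distrib_left]; exact subset_inter le_rfl hsub)
    _ ≤ #(s ∩ I) + #(s ∩ K) := card_union_le _ _
    _ ≤ #I + 1 := add_le_add (card_le_card inter_subset_right) hsK

theorem card_le_degree_of_forall_adj [Fintype V] [DecidableRel G.Adj] {v : V} {s : Finset V}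
    (h : ∀ w ∈ s, G.Adj v w) : #s ≤ G.degree v := by
  rw [← card_neighborFinset_eq_degree]
  exact card_le_card fun w hw => (mem_neighborFinset _ _ _).mpr (h w hw)

theorem IsIsolated.eq_of_reachable {u v : V} (hu : G.IsIsolated u) (h : G.Reachable u v) :
    u = v := by
  obtain ⟨p⟩ := h
  cases p with
  | nil => rfl
  | cons huw _ => exact absurd huw (hu _)

theorem card_connectedComponent_induce_compl_eq [DecidableEq V] {S I B : Finset V} {b : V}
    (hcover : ∀ v ∉ S, v ∈ I ∨ v ∈ B) (hIS : Disjoint I S)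
    (hI : ∀ x ∈ I, ∀ y, G.Adj x y → y ∈ S) (hB : G.IsClique (B : Set V)) (hBS : Disjoint B S)
    (hb : b ∈ B) (hbI : b ∉ I) :
    Nat.card (G.induce (S : Set V)ᶜ).ConnectedComponent = #I + 1 := by
  set G' := G.induce (S : Set V)ᶜ
  have hbS : b ∉ S := Finset.disjoint_left.mp hBS hb
  have notMem_S {x} (hx : x ∈ insert b I) : x ∉ S := by
    rcases mem_insert.mp hx with rfl | hx
    exacts [hbS, Finset.disjoint_left.mp hIS hx]
  have isolated {x} (hx : x ∈ I) (hxS : x ∉ S) : G'.IsIsolated ⟨x, hxS⟩ :=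
    fun y hxy => y.2 (hI x hx y hxy)
  let Φ : ↥(insert b I) → G'.ConnectedComponent :=
    fun x => G'.connectedComponentMk ⟨x, notMem_S x.2⟩
  have hΦ : Function.Bijective Φ := by
    refine ⟨fun x y hxy => ?_, fun C => ?_⟩
    · have hreach := ConnectedComponent.exact hxy
      refine Subtype.ext ?_
      rcases mem_insert.mp x.2 with hx | hx
      · rcases mem_insert.mp y.2 with hy | hy
        · rw [hx, hy]
        · exact (Subtype.mk.inj ((isolated hy _).eq_of_reachable hreach.symm)).symm
      · exact Subtype.mk.inj ((isolated hx _).eq_of_reachable hreach)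
    · obtain ⟨⟨v, hvS⟩, rfl⟩ := C.exists_rep
      rcases hcover v hvS with hv | hv
      · exact ⟨⟨v, mem_insert_of_mem hv⟩, rfl⟩
      · refine ⟨⟨b, mem_insert_self b I⟩, ConnectedComponent.sound ?_⟩
        obtain rfl | hbv := eq_or_ne b v
        · rfl
        exact (show G'.Adj ⟨b, hbS⟩ ⟨v, hvS⟩ from hB hb hv hbv).reachable
  rw [← Nat.card_eq_of_bijective Φ hΦ, Nat.card_eq_finsetCard, card_insert_of_notMem hbI]

theorem isIndepSet_insert_of_forall_adj_mem [DecidableEq V] {I A : Finset V} {b : V}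
    (hI : ∀ x ∈ I, ∀ y, G.Adj x y → y ∈ A) (hIA : Disjoint I A) (hbA : b ∉ A) :
    G.IsIndepSet (insert b I : Finset V) := by
  rintro u hu v hv huv hadj
  rcases mem_insert.mp hu with rfl | huI
  · rcases mem_insert.mp hv with rfl | hvI
    exacts [huv rfl, hbA (hI v hvI u hadj.symm)]
  · rcases mem_insert.mp hv with rfl | hvI
    exacts [hbA (hI u huI v hadj), Finset.disjoint_left.mp hIA hvI (hI u huI v hadj)]

theorem indepNum_eq_card_add_one [Fintype V] [DecidableEq V] {I K : Finset V} {b : V}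
    (hcover : I ∪ K = univ) (hK : G.IsClique (K : Set V))
    (hindep : G.IsIndepSet (insert b I : Finset V)) (hbI : b ∉ I) :
    G.indepNum = #I + 1 := by
  obtain ⟨s, hs⟩ := G.exists_isNIndepSet_indepNum
  refine le_antisymm ?_ ?_
  · rw [← hs.card_eq]
    exact hs.isIndepSet.card_le_card_add_one hK (hcover ▸ subset_univ s)
  · simpa [card_insert_of_notMem hbI] using hindep.card_le_indepNum

theorem min_card_le_minDegree [Fintype V] [DecidableRel G.Adj] [Nonempty V] {I A B : Finset V}
    (hcover : ∀ v, v ∈ I ∨ v ∈ A ∨ v ∈ B) (hIA : ∀ x ∈ I, ∀ y ∈ A, G.Adj x y)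
    (hBA : ∀ x ∈ B, ∀ y ∈ A, G.Adj x y) :
    min #I #A ≤ G.minDegree := by
  refine G.le_minDegree_of_forall_le_degree _ fun v => ?_
  rcases hcover v with hv | hv | hv
  · exact (min_le_right _ _).trans (G.card_le_degree_of_forall_adj (hIA v hv))
  · exact (min_le_left _ _).trans
      (G.card_le_degree_of_forall_adj fun w hw => (hIA w hw v hv).symm)
  · exact (min_le_right _ _).trans (G.card_le_degree_of_forall_adj (hBA v hv))

namespace Walk

variable {a : V}

theorem exists_mem_darts_fst_mem_snd_notMem [DecidableEq V] (p : G.Walk a a) {T : Set V}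
    {x y : V} (hx : x ∈ p.support) (hy : y ∈ p.support) (hxT : x ∈ T) (hyT : y ∉ T) :
    ∃ d ∈ p.darts, d.fst ∈ T ∧ d.snd ∉ T := by
  by_cases ha : a ∈ T
  · obtain ⟨d, hd, hdT⟩ := (p.takeUntil y hy).exists_boundary_dart T ha hyT
    exact ⟨d, p.darts_takeUntil_subset_darts hy hd, hdT⟩
  · obtain ⟨d, hd, hdT⟩ := (p.dropUntil x hx).exists_boundary_dart T hxT ha
    exact ⟨d, p.darts_dropUntil_subset_darts hx hd, hdT⟩

theorem IsCycle.injOn_snd_darts {p : G.Walk a a} (hp : p.IsCycle) :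
    {d | d ∈ p.darts}.InjOn fun d : G.Dart => d.snd :=
  fun _ hd _ hd' => List.inj_on_of_nodup_map (p.map_snd_darts ▸ hp.support_nodup) hd hd'

theorem IsHamiltonianCycle.card_connectedComponent_induce_compl_le [DecidableEq V]
    {p : G.Walk a a} (hp : p.IsHamiltonianCycle) {S : Finset V} (hS : S.Nonempty) :
    Nat.card (G.induce (S : Set V)ᶜ).ConnectedComponent ≤ #S := by
  set G' := G.induce (S : Set V)ᶜ
  have exit (C : G'.ConnectedComponent) :
      ∃ d ∈ p.darts, ∃ h : d.fst ∉ S, G'.connectedComponentMk ⟨d.fst, h⟩ = C ∧ d.snd ∈ S := by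
    obtain ⟨x, rfl⟩ := C.exists_rep
    obtain ⟨y, hy⟩ := hS
    obtain ⟨d, hd, ⟨h, hC⟩, hdT⟩ := p.exists_mem_darts_fst_mem_snd_notMem
      (T := {v | ∃ h : v ∉ S, G'.connectedComponentMk ⟨v, h⟩ = G'.connectedComponentMk x})
      (hp.mem_support x) (hp.mem_support y) ⟨x.2, rfl⟩ (fun ⟨h, _⟩ => h hy)
    refine ⟨d, hd, h, hC, not_not.mp fun hsnd => hdT ⟨hsnd, ?_⟩⟩
    rw [← hC]
    exact ConnectedComponent.sound (show G'.Adj ⟨_, h⟩ ⟨_, hsnd⟩ from d.adj).reachable.symm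
  choose d hd _ hC hsnd using exit
  calc Nat.card G'.ConnectedComponent ≤ Nat.card S := Nat.card_le_card_of_injective
        (fun C => ⟨(d C).snd, hsnd C⟩) fun C C' h => by
          rw [← hC C, ← hC C']
          simp only [hp.isCycle.injOn_snd_darts (hd C) (hd C') (congrArg Subtype.val h)]
    _ = #S := Nat.card_eq_finsetCard S

end Walk

theorem IsHamiltonian.card_connectedComponent_induce_compl_le [Fintype V] [DecidableEq V]
    (hG : G.IsHamiltonian) {S : Finset V} (hS : S.Nonempty) :
    Nat.card (G.induce (S : Set V)ᶜ).ConnectedComponent ≤ #S := by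
  obtain ⟨s, hs⟩ := hS
  by_cases hV : Fintype.card V = 1
  · have : IsEmpty ((S : Set V)ᶜ : Set V) :=
      ⟨fun ⟨x, hx⟩ => hx (Fintype.card_le_one_iff.mp hV.le x s ▸ hs)⟩
    simp
  · obtain ⟨a, p, hp⟩ := hG hV
    exact hp.card_connectedComponent_induce_compl_le ⟨s, hs⟩

end SimpleGraph

theorem stmt15_general {V : Type*} [Fintype V] [DecidableEq V] (k : ℕ)
    (hk : 2 ≤ k)
    (I A B : Finset V) (hIA : Disjoint I A) (hIB : Disjoint I B) (hAB : Disjoint A B)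
    (hcover : I ∪ A ∪ B = Finset.univ)
    (hI : I.card = k - 1) (hA : A.card = (k + 1) / 2) (hB : B.Nonempty)
    (H : SimpleGraph V) [DecidableRel H.Adj]
    (hH : ∀ x y : V, H.Adj x y ↔ x ≠ y ∧
      ((x ∈ I ∧ y ∈ A) ∨ (x ∈ A ∧ y ∈ I) ∨ (x ∈ A ∪ B ∧ y ∈ A ∪ B))) :
    indepNum H = k ∧ k / 2 ≤ H.minDegree ∧
      Nat.card ((H.induce ((↑A : Set V)ᶜ)).ConnectedComponent) = k ∧
      ¬ H.IsHamiltonian := by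
  obtain ⟨b, hb⟩ := hB
  have hbI : b ∉ I := disjoint_right.mp hIB hb
  have mem_cases (v : V) : v ∈ I ∨ v ∈ A ∨ v ∈ B := by
    simpa [or_assoc] using eq_univ_iff_forall.mp hcover v
  have mem_A_of_adj x (hx : x ∈ I) y (hxy : H.Adj x y) : y ∈ A := by
    rcases ((hH x y).mp hxy).2 with ⟨-, hy⟩ | ⟨hxA, -⟩ | ⟨hxAB, -⟩
    exacts [hy, absurd hxA (disjoint_left.mp hIA hx),
      absurd hxAB (by simp [disjoint_left.mp hIA hx, disjoint_left.mp hIB hx])]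
  have adj_I_A x (hx : x ∈ I) y (hy : y ∈ A) : H.Adj x y :=
    (hH x y).mpr ⟨ne_of_mem_of_not_mem hx (disjoint_right.mp hIA hy), .inl ⟨hx, hy⟩⟩
  have clique_AB : H.IsClique (↑(A ∪ B) : Set V) := fun x hx y hy hxy =>
    (hH x y).mpr ⟨hxy, .inr (.inr ⟨hx, hy⟩)⟩
  have hcomp : Nat.card (H.induce (↑A : Set V)ᶜ).ConnectedComponent = k := by
    rw [SimpleGraph.card_connectedComponent_induce_compl_eq
      (fun v hv => (mem_cases v).imp_right (·.resolve_left hv)) hIA mem_A_of_adj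
      (clique_AB.subset (by simp)) hAB.symm hb hbI, hI]
    omega
  refine ⟨?_, ?_, hcomp, fun hham => ?_⟩
  · rw [indepNum_eq_simpleGraph_indepNum, SimpleGraph.indepNum_eq_card_add_one
      (by rw [← union_assoc, hcover]) clique_AB
      (SimpleGraph.isIndepSet_insert_of_forall_adj_mem mem_A_of_adj hIA
        (disjoint_right.mp hAB hb)) hbI, hI]
    omega
  · have : Nonempty V := ⟨b⟩
    have := H.min_card_le_minDegree mem_cases adj_I_A fun x hx y hy =>
      clique_AB (by simp [hx]) (by simp [hy])
        (ne_of_mem_of_not_mem hy (disjoint_right.mp hAB hx)).symm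
    omega
  · have := hham.card_connectedComponent_induce_compl_le (card_pos.mp (by omega : 0 < #A))
    omega

/-- Let `V = I ∪ A ∪ B` be a partition with `|I| = k − 1`, `|A| = ⌈k/2⌉`, `B ≠ ∅`, and
let `H` have as edges all pairs between `I` and `A` together with all pairs inside
`A ∪ B`.  Then `α(H) = k`, `δ(H) ≥ k/2`, deleting `A` leaves exactly `k` connected
components, and `H` is not Hamiltonian. -/
theorem stmt15 {V : Type*} [Fintype V] [DecidableEq V] (n k : ℕ)
    (hn : Fintype.card V = n) (hk : 2 ≤ k)
    (I A B : Finset V) (hIA : Disjoint I A) (hIB : Disjoint I B) (hAB : Disjoint A B)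
    (hcover : I ∪ A ∪ B = Finset.univ)
    (hI : I.card = k - 1) (hA : A.card = (k + 1) / 2) (hB : B.Nonempty)
    (H : SimpleGraph V) [DecidableRel H.Adj]
    (hH : ∀ x y : V, H.Adj x y ↔ x ≠ y ∧
      ((x ∈ I ∧ y ∈ A) ∨ (x ∈ A ∧ y ∈ I) ∨ (x ∈ A ∪ B ∧ y ∈ A ∪ B))) :
    indepNum H = k ∧ k / 2 ≤ H.minDegree ∧
      Nat.card ((H.induce ((↑A : Set V)ᶜ)).ConnectedComponent) = k ∧
      ¬ H.IsHamiltonian :=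
  stmt15_general k hk I A B hIA hIB hAB hcover hI hA hB H hH
end

section
/- Let G be a directed graph on n vertices such that for every ordered pair of disjoint vertex subsets S, T with |S| = |T| = k (where k < n), there is a directed edge from S to T. Then G contains a directed path on at least n − 2k + 2 vertices. -/
/-!
Run a depth-first search: `S` holds the finished vertices, the stack `Q` is a directed path,
and `U` the unvisited vertices. A vertex is finished only when it has no arc into `U`, so there
is never an arc from `S` to `U`; hence `|S| < k` as long as `|U| ≥ k`. Stop as soon as `|U|`
drops to `k - 1`: this happens just after a push, so then `|S| ≤ k - 1` and the stack holds at
least `n - 2k + 2` vertices.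
-/

def HasArcBetweenDisjoint {V : Type*} (r : V → V → Prop) (k : ℕ) : Prop :=
  ∀ S T : Finset V, Disjoint S T → S.card = k → T.card = k → ∃ s ∈ S, ∃ t ∈ T, r s t

theorem HasArcBetweenDisjoint.card_lt {V : Type*} {r : V → V → Prop} {k : ℕ}
    (h : HasArcBetweenDisjoint r k) {S U : Finset V} (hSU : Disjoint S U)
    (hno : ∀ s ∈ S, ∀ u ∈ U, ¬ r s u) (hU : k ≤ U.card) : S.card < k := by
  by_contra! hS
  obtain ⟨S', hS'S, hS'⟩ := Finset.exists_subset_card_eq hS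
  obtain ⟨U', hU'U, hU'⟩ := Finset.exists_subset_card_eq hU
  obtain ⟨s, hs, u, hu, hsu⟩ :=
    h S' U' (Finset.disjoint_of_subset_left hS'S (Finset.disjoint_of_subset_right hU'U hSU)) hS' hU'
  exact hno s (hS'S hs) u (hU'U hu) hsu

namespace DFS

variable {V : Type*} {r : V → V → Prop}

/-- The stack is stored top first, so it is a path for the reversed relation. -/
structure IsState (r : V → V → Prop) (S : Finset V) (Q : List V) (U : Finset V) : Prop where
  disjoint : Disjoint S U
  nodup : Q.Nodup
  isChain : Q.IsChain (fun a b => r b a)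
  notMem_finished : ∀ v ∈ Q, v ∉ S
  notMem_unvisited : ∀ v ∈ Q, v ∉ U
  no_arc : ∀ s ∈ S, ∀ u ∈ U, ¬ r s u

theorem isState_init (U : Finset V) : IsState r ∅ [] U :=
  ⟨Finset.disjoint_empty_left U, List.nodup_nil, List.isChain_nil, by simp, by simp, by simp⟩

namespace IsState

variable {S U : Finset V} {Q : List V}

theorem push [DecidableEq V] (hs : IsState r S Q U) {u : V} (hu : u ∈ U)
    (hch : (u :: Q).IsChain (fun a b => r b a)) : IsState r S (u :: Q) (U.erase u) where
  disjoint := Finset.disjoint_of_subset_right (Finset.erase_subset u U) hs.disjoint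
  nodup := List.nodup_cons.2 ⟨fun huQ => hs.notMem_unvisited u huQ hu, hs.nodup⟩
  isChain := hch
  notMem_finished := by
    rintro v (_ | ⟨_, hv⟩)
    · exact Finset.disjoint_right.1 hs.disjoint hu
    · exact hs.notMem_finished v hv
  notMem_unvisited := by
    rintro v (_ | ⟨_, hv⟩)
    · exact Finset.notMem_erase _ _
    · exact fun hvU => hs.notMem_unvisited v hv (Finset.mem_of_mem_erase hvU)
  no_arc s hs' v hv := hs.no_arc s hs' v (Finset.mem_of_mem_erase hv)

theorem pop [DecidableEq V] {q : V} (hs : IsState r S (q :: Q) U) (hq : ∀ u ∈ U, ¬ r q u) :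
    IsState r (insert q S) Q U where
  disjoint := Finset.disjoint_insert_left.2
    ⟨hs.notMem_unvisited q List.mem_cons_self, hs.disjoint⟩
  nodup := (List.nodup_cons.1 hs.nodup).2
  isChain := hs.isChain.tail
  notMem_finished v hv hvS := by
    rcases Finset.mem_insert.1 hvS with rfl | hvS
    · exact (List.nodup_cons.1 hs.nodup).1 hv
    · exact hs.notMem_finished v (List.mem_cons_of_mem q hv) hvS
  notMem_unvisited v hv := hs.notMem_unvisited v (List.mem_cons_of_mem q hv)
  no_arc s hs' v hv := by
    rcases Finset.mem_insert.1 hs' with rfl | hs'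
    · exact hq v hv
    · exact hs.no_arc s hs' v hv

-- `S`, `Q`, `U` are bound here rather than by `variable`, which would fix them in the recursion.
theorem exists_path [DecidableEq V] {S U : Finset V} {Q : List V} {k : ℕ} (hk : 0 < k)
    (h : HasArcBetweenDisjoint r k) (hs : IsState r S Q U) (hU : k ≤ U.card) :
    ∃ l : List V, l.Nodup ∧ l.IsChain r ∧ S.card + Q.length + U.card + 2 ≤ 2 * k + l.length := by
  have hS := h.card_lt hs.disjoint hs.no_arc hU
  have after_push : ∀ u ∈ U, (u :: Q).IsChain (fun a b => r b a) →
      ∃ l : List V, l.Nodup ∧ l.IsChain r ∧ S.card + Q.length + U.card + 2 ≤ 2 * k + l.length := by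
    intro u hu hch
    have hs' := hs.push hu hch
    have hcard := Finset.card_erase_of_mem hu
    by_cases hk' : k ≤ (U.erase u).card
    · obtain ⟨l, hl, hlr, hlen⟩ := hs'.exists_path hk h hk'
      exact ⟨l, hl, hlr, by simp only [List.length_cons] at hlen; omega⟩
    · exact ⟨(u :: Q).reverse, List.nodup_reverse.2 hs'.nodup, List.isChain_reverse.2 hch,
        by simp only [List.length_reverse, List.length_cons]; omega⟩
  match Q, hs with
  | [], _ =>
    obtain ⟨u, hu⟩ := Finset.card_pos.1 (hk.trans_le hU)
    exact after_push u hu (List.isChain_singleton u)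
  | q :: Q', hs =>
    by_cases harc : ∃ u ∈ U, r q u
    · obtain ⟨u, hu, hqu⟩ := harc
      exact after_push u hu (List.isChain_cons_cons.2 ⟨hqu, hs.isChain⟩)
    · push Not at harc
      obtain ⟨l, hl, hlr, hlen⟩ := (hs.pop harc).exists_path hk h hU
      rw [Finset.card_insert_of_notMem (hs.notMem_finished q List.mem_cons_self)] at hlen
      exact ⟨l, hl, hlr, by simp only [List.length_cons]; omega⟩
termination_by 2 * U.card + Q.length

end IsState

end DFS

/-- If `G` is an `n`-vertex digraph (arc relation `r`) such that for every ordered pair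
of disjoint `k`-element vertex sets `S, T` there is an arc from `S` to `T`, then `G`
contains a directed path on at least `n − 2k + 2` vertices. -/
theorem stmt16 {V : Type*} [Fintype V] [DecidableEq V] (n k : ℕ)
    (hn : Fintype.card V = n) (hk : 0 < k) (hkn : k < n) (r : V → V → Prop)
    (h : ∀ S T : Finset V, Disjoint S T → S.card = k → T.card = k →
      ∃ s ∈ S, ∃ t ∈ T, r s t) :
    ∃ l : List V, l.Nodup ∧ l.Chain' r ∧ (n : ℤ) - 2 * k + 2 ≤ l.length := by
  have hU : k ≤ (Finset.univ : Finset V).card := by rw [Finset.card_univ, hn]; omega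
  obtain ⟨l, hl, hlr, hlen⟩ := (DFS.isState_init (r := r) Finset.univ).exists_path hk h hU
  rw [Finset.card_univ, hn] at hlen
  exact ⟨l, hl, hlr, by simp only [Finset.card_empty, List.length_nil] at hlen; omega⟩
end

section
/- Let G be a directed graph on n vertices such that for every ordered pair of disjoint vertex subsets S, T with |S| = |T| = k (where 4k ≤ n), there is a directed edge from S to T. Then G contains a directed cycle of length at least n − 4k + 4. -/
/-!
Run a depth-first search. The finished vertices `S` never send an arc to the unvisited
vertices `T`, so the hypothesis keeps `|S| < k` as long as `|T| ≥ k`; once `|T| < k`, the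
stack is a directed path on at least `n - 2k + 2` vertices. Some arc goes from the last `k`
vertices of this path back to its first `k`, closing a cycle that misses at most `2k - 2`
vertices of the path.
-/

def HitsDisjointPairs {V : Type*} (r : V → V → Prop) (k : ℕ) : Prop :=
  ∀ S T : Finset V, Disjoint S T → S.card = k → T.card = k → ∃ s ∈ S, ∃ t ∈ T, r s t

theorem List.exists_infix_head_getLast {α : Type*} (P : List α) {i j : ℕ} (hij : i ≤ j)
    (hj : j < P.length) :
    ∃ (l : List α) (hne : l ≠ []), l <:+: P ∧ l.head hne = P[i] ∧ l.getLast hne = P[j] ∧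
      l.length = j - i + 1 := by
  have hlen : ((P.drop i).take (j - i + 1)).length = j - i + 1 := by
    rw [List.length_take, List.length_drop]; omega
  refine ⟨(P.drop i).take (j - i + 1), List.ne_nil_of_length_pos (by omega),
    (List.take_prefix _ _).isInfix.trans (List.drop_suffix i P).isInfix, ?_, ?_, hlen⟩
  · simp [List.head_eq_getElem]
  · rw [List.getLast_eq_getElem]
    simp only [hlen, List.getElem_take, List.getElem_drop]
    congr 1
    omega

namespace HitsDisjointPairs

variable {V : Type*} {r : V → V → Prop} {k : ℕ}

theorem pos (hr : HitsDisjointPairs r k) : 0 < k := by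
  by_contra hk
  obtain ⟨s, hs, -⟩ := hr ∅ ∅ (Finset.disjoint_empty_left _) (by simp; omega) (by simp; omega)
  simp at hs

theorem card_lt_of_forall_not_rel (hr : HitsDisjointPairs r k) {A B : Finset V}
    (hAB : Disjoint A B) (hB : k ≤ B.card) (hno : ∀ a ∈ A, ∀ b ∈ B, ¬ r a b) : A.card < k := by
  by_contra! hA
  obtain ⟨A', hA'A, hA'⟩ := Finset.exists_subset_card_eq hA
  obtain ⟨B', hB'B, hB'⟩ := Finset.exists_subset_card_eq hB
  obtain ⟨a, ha, b, hb, hab⟩ := hr A' B' (hAB.mono hA'A hB'B) hA' hB'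
  exact hno a (hA'A ha) b (hB'B hb) hab

end HitsDisjointPairs

/-- `S` are the finished vertices, `T` the unvisited ones, and `U` the stack, top first. -/
structure IsDFSState {V : Type*} (r : V → V → Prop) (k n : ℕ) (S T : Finset V) (U : List V) :
    Prop where
  disjoint : Disjoint S T
  not_mem_done : ∀ x ∈ U, x ∉ S
  not_mem_todo : ∀ x ∈ U, x ∉ T
  nodup : U.Nodup
  isChain : U.IsChain (flip r)
  not_rel : ∀ s ∈ S, ∀ t ∈ T, ¬ r s t
  card_done : S.card < k
  le_card : n ≤ S.card + U.length + T.card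

namespace IsDFSState

variable {V : Type*} {r : V → V → Prop} {k n : ℕ}

theorem initial [Fintype V] (hr : HitsDisjointPairs r k) :
    IsDFSState r k (Fintype.card V) ∅ Finset.univ [] where
  disjoint := Finset.disjoint_empty_left _
  not_mem_done := by simp
  not_mem_todo := by simp
  nodup := List.nodup_nil
  isChain := List.isChain_nil
  not_rel := by simp
  card_done := by simpa using hr.pos
  le_card := by simp

variable [DecidableEq V] {S T : Finset V} {U : List V}

theorem push (h : IsDFSState r k n S T U) {t : V} (ht : t ∈ T) (hrt : ∀ u ∈ U.head?, r u t) :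
    IsDFSState r k n S (T.erase t) (t :: U) where
  disjoint := h.disjoint.mono_right (T.erase_subset t)
  not_mem_done :=
    List.forall_mem_cons.mpr ⟨h.disjoint.notMem_of_mem_right_finset ht, h.not_mem_done⟩
  not_mem_todo := List.forall_mem_cons.mpr
    ⟨Finset.notMem_erase t T, fun x hx hxT => h.not_mem_todo x hx (Finset.mem_of_mem_erase hxT)⟩
  nodup := List.nodup_cons.mpr ⟨fun htU => h.not_mem_todo t htU ht, h.nodup⟩
  isChain := List.isChain_cons.mpr ⟨hrt, h.isChain⟩
  not_rel s hs t' ht' := h.not_rel s hs t' (Finset.mem_of_mem_erase ht')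
  card_done := h.card_done
  le_card := by
    have := h.le_card
    rw [Finset.card_erase_of_mem ht, List.length_cons]
    have := Finset.card_pos.mpr ⟨t, ht⟩
    omega

theorem pop (hr : HitsDisjointPairs r k) {u : V} (h : IsDFSState r k n S T (u :: U))
    (hT : k ≤ T.card) (hu : ∀ t ∈ T, ¬ r u t) : IsDFSState r k n (insert u S) T U := by
  have disjoint : Disjoint (insert u S) T :=
    Finset.disjoint_insert_left.mpr ⟨h.not_mem_todo u List.mem_cons_self, h.disjoint⟩
  have not_rel : ∀ s ∈ insert u S, ∀ t ∈ T, ¬ r s t :=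
    (Finset.forall_mem_insert _ _ _).mpr ⟨hu, h.not_rel⟩
  refine ⟨disjoint, fun x hx => ?_, fun x hx => h.not_mem_todo x (List.mem_cons_of_mem u hx),
    (List.nodup_cons.mp h.nodup).2, h.isChain.tail, not_rel,
    hr.card_lt_of_forall_not_rel disjoint hT not_rel, ?_⟩
  · rw [Finset.mem_insert, not_or]
    exact ⟨fun hxu => (List.nodup_cons.mp h.nodup).1 (hxu ▸ hx),
      h.not_mem_done x (List.mem_cons_of_mem u hx)⟩
  · have := h.le_card
    rw [Finset.card_insert_of_notMem (h.not_mem_done u List.mem_cons_self)]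
    simp only [List.length_cons] at this
    omega

theorem exists_long_path (hr : HitsDisjointPairs r k) {S T : Finset V} {U : List V}
    (h : IsDFSState r k n S T U) :
    ∃ P : List V, P.Nodup ∧ P.IsChain r ∧ n + 2 ≤ P.length + 2 * k := by
  by_cases hT : T.card < k
  · refine ⟨U.reverse, List.nodup_reverse.mpr h.nodup, List.isChain_reverse.mpr h.isChain, ?_⟩
    have := h.le_card
    have := h.card_done
    rw [List.length_reverse]
    omega
  rw [not_lt] at hT
  by_cases hpush : ∃ t ∈ T, ∀ u ∈ U.head?, r u t
  · obtain ⟨t, ht, hrt⟩ := hpush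
    exact (h.push ht hrt).exists_long_path hr
  push Not at hpush
  match U, h, hpush with
  | [], _, hpush =>
    obtain ⟨t, ht⟩ := Finset.card_pos.mp (hr.pos.trans_le hT)
    simpa using hpush t ht
  | u :: U, h, hpush =>
    exact (h.pop hr hT (by simpa using hpush)).exists_long_path hr
-- a push moves a vertex from `T` onto the stack, a pop shortens the stack
termination_by 2 * T.card + U.length
decreasing_by
  · rw [Finset.card_erase_of_mem ht, List.length_cons]
    have := Finset.card_pos.mpr ⟨t, ht⟩
    omega
  · rw [List.length_cons]
    omega

end IsDFSState

theorem HitsDisjointPairs.exists_long_cycle_of_path {V : Type*} [DecidableEq V]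
    {r : V → V → Prop} {k : ℕ} (hr : HitsDisjointPairs r k) {P : List V} (hP : P.Nodup)
    (hPr : P.IsChain r) (hk : 2 * k ≤ P.length) :
    ∃ (l : List V) (hne : l ≠ []), l.Nodup ∧ l.IsChain r ∧ r (l.getLast hne) (l.head hne) ∧
      P.length + 2 ≤ l.length + 2 * k := by
  have hdisj : Disjoint (P.drop (P.length - k)).toFinset (P.take k).toFinset :=
    List.disjoint_toFinset_iff_disjoint.mpr (List.disjoint_take_drop hP (by omega)).symm
  obtain ⟨s, hs, t, ht, hst⟩ := hr _ _ hdisj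
    (by rw [List.toFinset_card_of_nodup (hP.sublist (List.drop_sublist _ _)), List.length_drop]
        omega)
    (by rw [List.toFinset_card_of_nodup (hP.sublist (List.take_sublist _ _)), List.length_take]
        omega)
  obtain ⟨j, hj, rfl⟩ := List.mem_drop_iff_getElem.mp (List.mem_toFinset.mp hs)
  obtain ⟨i, hi, rfl⟩ := List.mem_take_iff_getElem.mp (List.mem_toFinset.mp ht)
  obtain ⟨l, hne, hlP, hhead, hlast, hlen⟩ :=
    P.exists_infix_head_getLast (i := i) (j := P.length - k + j) (by omega) (by omega)
  exact ⟨l, hne, hP.sublist hlP.sublist, hPr.infix hlP, by rwa [hhead, hlast], by omega⟩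

theorem stmt17_general {V : Type*} [Fintype V] [DecidableEq V] (n k : ℕ)
    (hn : Fintype.card V = n) (hkn : 4 * k ≤ n) (r : V → V → Prop)
    (h : ∀ S T : Finset V, Disjoint S T → S.card = k → T.card = k →
      ∃ s ∈ S, ∃ t ∈ T, r s t) :
    ∃ (l : List V) (hne : l ≠ []), l.Nodup ∧ l.Chain' r ∧
      r (l.getLast hne) (l.head hne) ∧ (n : ℤ) - 4 * k + 4 ≤ l.length := by
  obtain ⟨P, hP, hPr, hPlen⟩ := (IsDFSState.initial h).exists_long_path h
  obtain ⟨l, hne, hl, hlr, hcyc, hlen⟩ :=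
    HitsDisjointPairs.exists_long_cycle_of_path h hP hPr (by omega)
  exact ⟨l, hne, hl, hlr, hcyc, by omega⟩

/-- If `G` is an `n`-vertex digraph (arc relation `r`) such that for every ordered pair
of disjoint `k`-element vertex sets `S, T` (where `4k ≤ n`) there is an arc from `S` to
`T`, then `G` contains a directed cycle of length at least `n − 4k + 4`. -/
theorem stmt17 {V : Type*} [Fintype V] [DecidableEq V] (n k : ℕ)
    (hn : Fintype.card V = n) (hk : 0 < k) (hkn : 4 * k ≤ n) (r : V → V → Prop)
    (h : ∀ S T : Finset V, Disjoint S T → S.card = k → T.card = k →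
      ∃ s ∈ S, ∃ t ∈ T, r s t) :
    ∃ (l : List V) (hne : l ≠ []), l.Nodup ∧ l.Chain' r ∧
      r (l.getLast hne) (l.head hne) ∧ (n : ℤ) - 4 * k + 4 ≤ l.length :=
  stmt17_general n k hn hkn r h
end
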